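/- Let g, g_n : ℝ → (n×n real matrices) be curves differentiable at t₀ with g(t₀) and g_n(t₀) invertible, and suppose g'(t₀) = V̄·g(t₀) and g_n'(t₀) = W̄·g_n(t₀) for n×n real matrices V̄, W̄. Then the right-invariant error ḡ_e(t) := g(t)·g_n(t)⁻¹ is differentiable at t₀ with derivative (V̄ − ḡ_e(t₀)·W̄·ḡ_e(t₀)⁻¹)·ḡ_e(t₀). Equivalently, ḡ̇_e = (V̄ − Ad_{ḡ_e} W̄)·ḡ_e. -/

import Mathlib

/-!
By the product rule and `(h⁻¹)' = -h⁻¹ h' h⁻¹`, the error `e = g h⁻¹` has derivative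
`V g h⁻¹ - g h⁻¹ W h h⁻¹ = V e - e W`, and `e W = (e W e⁻¹) e` since `e` is invertible. The argument
works in any normed algebra with summable geometric series, using `Ring.inverse`, which agrees with
the matrix inverse.
-/

open Matrix

attribute [local instance] Matrix.frobeniusNormedAddCommGroup Matrix.frobeniusNormedSpace

open scoped Ring

theorem sub_conj_mul_of_isUnit {R : Type*} [Ring R] {e : R} (he : IsUnit e) (V W : R) :
    (V - e * W * e⁻¹ʳ) * e = V * e - e * W := by
  rw [sub_mul, Ring.inverse_mul_cancel_right _ _ he]

section RingInverse

variable {𝕜 R : Type*} [NontriviallyNormedField 𝕜] [NormedRing R] [HasSummableGeomSeries R]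
  [NormedAlgebra 𝕜 R]

theorem HasDerivAt.ringInverse {f : 𝕜 → R} {f' : R} {x : 𝕜} (hf : HasDerivAt f f' x)
    (hfx : IsUnit (f x)) :
    HasDerivAt (fun t => (f t)⁻¹ʳ) (-((f x)⁻¹ʳ * f' * (f x)⁻¹ʳ)) x := by
  obtain ⟨u, hu⟩ := hfx
  have hinv := (hu ▸ hasFDerivAt_ringInverse (𝕜 := 𝕜) u).comp_hasDerivAt x hf
  rw [← hu, Ring.inverse_unit]
  exact hinv

theorem HasDerivAt.mul_ringInverse_of_rightInvariant {g h : 𝕜 → R} {V W : R} {x : 𝕜}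
    (hg : HasDerivAt g (V * g x) x) (hh : HasDerivAt h (W * h x) x)
    (hgx : IsUnit (g x)) (hhx : IsUnit (h x)) :
    HasDerivAt (fun t => g t * (h t)⁻¹ʳ)
      ((V - g x * (h x)⁻¹ʳ * W * (g x * (h x)⁻¹ʳ)⁻¹ʳ) * (g x * (h x)⁻¹ʳ)) x := by
  have he : IsUnit (g x * (h x)⁻¹ʳ) := hgx.mul hhx.ringInverse
  refine (hg.mul (hh.ringInverse hhx)).congr_deriv ?_
  rw [sub_conj_mul_of_isUnit he, ← mul_assoc _ W, Ring.mul_inverse_cancel_right _ _ hhx]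
  noncomm_ring

end RingInverse

attribute [local instance] Matrix.frobeniusNormedRing Matrix.frobeniusNormedAlgebra

theorem right_invariant_error_dynamics
    {n : Type*} [Fintype n] [DecidableEq n]
    (g gn : ℝ → Matrix n n ℝ) (t₀ : ℝ) (Vb Wb : Matrix n n ℝ)
    (hg : IsUnit (g t₀)) (hgn : IsUnit (gn t₀))
    (hg' : HasDerivAt g (Vb * g t₀) t₀) (hgn' : HasDerivAt gn (Wb * gn t₀) t₀) :
    let ge := g t₀ * (gn t₀)⁻¹
    HasDerivAt (fun t => g t * (gn t)⁻¹) ((Vb - ge * Wb * ge⁻¹) * ge) t₀ := by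
  have h := hg'.mul_ringInverse_of_rightInvariant hgn' hg hgn
  simp only [← Matrix.nonsing_inv_eq_ringInverse] at h
  exact h
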